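/- Let p be an odd prime and let k be an integer with 0 ≤ k ≤ (p-1)/2. Then (-16)^k · C((p-1)/2 + k, 2k) ≡ C(2k,k) (mod p²), i.e. (-1)^k · 16^k · C((p-1)/2 + k, 2k) ≡ C(2k,k) (mod p²). Equivalently, C((p-1)/2 + k, 2k) ≡ C(2k,k) · (-16)^(-k) (mod p²). -/

import Mathlib

/-!
Write `p = 2m + 1`. Then `(2k)! · C(m + k, 2k) = ∏_{j<k} (m + j + 1)(m - j)` and
`(2k)! · C(2k, k) = ∏_{j<k} 4(2j + 1)²`, while `-16 (m + j + 1)(m - j) = 4(2j + 1)² - 4p²`.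
So the two products agree modulo `p²` after multiplying the first by `(-16)^k`, and `(2k)!` can be
cancelled because `2k < p`.
-/

open Nat

lemma Nat.descFactorial_add_succ_two_mul_succ {m k : ℕ} (hk : k ≤ m) :
    (m + (k + 1)).descFactorial (2 * (k + 1))
      = (m + k + 1) * (m - k) * (m + k).descFactorial (2 * k) := by
  rw [show m + (k + 1) = m + k + 1 by ring, show 2 * (k + 1) = 2 * k + 1 + 1 by ring,
    succ_descFactorial_succ, descFactorial_succ, show m + k - 2 * k = m - k by omega, mul_assoc]

lemma Nat.factorial_mul_centralBinom_succ (k : ℕ) :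
    (2 * (k + 1))! * (k + 1).centralBinom = 4 * (2 * k + 1) ^ 2 * ((2 * k)! * k.centralBinom) := by
  apply Nat.eq_of_mul_eq_mul_left k.succ_pos
  calc (k + 1) * ((2 * (k + 1))! * (k + 1).centralBinom)
      = (2 * k + 2) * (2 * k + 1) * (2 * k)! * ((k + 1) * (k + 1).centralBinom) := by
        rw [show 2 * (k + 1) = 2 * k + 1 + 1 by ring, factorial_succ, factorial_succ]; ring
    _ = (k + 1) * (4 * (2 * k + 1) ^ 2 * ((2 * k)! * k.centralBinom)) := by
        rw [succ_mul_centralBinom_succ]; ring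

theorem Int.ModEq.cancel_left_of_isCoprime {n a b c : ℤ} (hnc : IsCoprime n c)
    (h : c * a ≡ c * b [ZMOD n]) : a ≡ b [ZMOD n] := by
  rw [Int.modEq_iff_dvd, ← mul_sub] at *
  exact hnc.dvd_of_dvd_mul_left h

theorem neg_sixteen_pow_mul_descFactorial_modEq {m k : ℕ} (hk : k ≤ m) :
    (-16 : ℤ) ^ k * (m + k).descFactorial (2 * k)
      ≡ (2 * k)! * k.centralBinom [ZMOD (2 * m + 1) ^ 2] := by
  induction k with
  | zero => simp
  | succ k ih =>
    have hkm : k ≤ m := by omega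
    have hstep :
        (-16 : ℤ) * ((m + k + 1) * (m - k)) ≡ 4 * (2 * k + 1) ^ 2 [ZMOD (2 * m + 1) ^ 2] :=
      Int.modEq_iff_dvd.mpr ⟨4, by ring⟩
    calc (-16 : ℤ) ^ (k + 1) * (m + (k + 1)).descFactorial (2 * (k + 1))
        = (-16 : ℤ) * ((m + k + 1) * (m - k)) * ((-16) ^ k * (m + k).descFactorial (2 * k)) := by
          rw [descFactorial_add_succ_two_mul_succ hkm]; push_cast [hkm]; ring
      _ ≡ 4 * (2 * k + 1) ^ 2 * ((2 * k)! * k.centralBinom) [ZMOD (2 * m + 1) ^ 2] :=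
          hstep.mul (ih hkm)
      _ = (2 * (k + 1))! * (k + 1).centralBinom := by
          exact_mod_cast (factorial_mul_centralBinom_succ k).symm

theorem neg_sixteen_pow_mul_choose_modEq {m k : ℕ} (hk : k ≤ m)
    (hcop : Coprime (2 * m + 1) (2 * k)!) :
    (-16 : ℤ) ^ k * (m + k).choose (2 * k) ≡ (2 * k).choose k [ZMOD (2 * m + 1) ^ 2] := by
  have hcop_sq : IsCoprime ((2 * m + 1 : ℤ) ^ 2) (2 * k)! := by
    exact_mod_cast hcop.isCoprime.pow_left
  refine Int.ModEq.cancel_left_of_isCoprime hcop_sq ?_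
  have := neg_sixteen_pow_mul_descFactorial_modEq hk
  rw [descFactorial_eq_factorial_mul_choose, centralBinom_eq_two_mul_choose] at this
  push_cast at this
  convert this using 1; ring

theorem key_congruence (p : ℕ) (hp : p.Prime) (hodd : Odd p)
    (k : ℕ) (hk : k ≤ (p - 1) / 2) :
    ((-16 : ℤ)) ^ k * (Nat.choose ((p - 1) / 2 + k) (2 * k) : ℤ) ≡
      (Nat.choose (2 * k) k : ℤ) [ZMOD (p : ℤ) ^ 2] := by
  obtain ⟨m, rfl⟩ := hodd
  have hm : (2 * m + 1 - 1) / 2 = m := by omega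
  rw [hm] at hk ⊢
  push_cast
  exact neg_sixteen_pow_mul_choose_modEq hk (hp.coprime_factorial_of_lt (by omega))
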